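/- Let ξ be an approximate design with nonsingular information matrix M, eigenvalues λ_1 ≤ … ≤ λ_m and corresponding orthonormal eigenvectors u_1, …, u_m. Let v_1, …, v_s be unit-norm eigenvectors of M, let α_1, …, α_s ≥ 0 with Σ_i α_i = 1, set Z = Σ_{i=1}^s α_i v_i v_iᵀ and h = max_{x ∈ X} tr(H(x) Z). If h > λ_1, then for every x* ∈ X that supports some E-optimal design and for every y ∈ [0, λ_1/(h − λ_1)), it holds that Σ_{i=1}^m (u_iᵀ H(x*) u_i) / ((λ_i − h) y + λ_1) ≥ 1. -/

import Mathlib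

open Matrix BigOperators Finset

/-- An approximate design on a finite design space `X`: nonnegative weights summing to 1. -/
def IsDesign {X : Type*} [Fintype X] (ξ : X → ℝ) : Prop :=
  (∀ x, 0 ≤ ξ x) ∧ ∑ x, ξ x = 1

/-- The information matrix `M(ξ) = ∑_x ξ(x) H(x)` of a design `ξ`. -/
noncomputable def infoMatrix {X : Type*} [Fintype X] {m : ℕ}
    (H : X → Matrix (Fin m) (Fin m) ℝ) (ξ : X → ℝ) : Matrix (Fin m) (Fin m) ℝ :=
  ∑ x, ξ x • H x

/-- The smallest eigenvalue `λ₁(A)` of a real symmetric matrix `A`, expressed as the minimum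
of the Rayleigh quotient `vᵀ A v` over unit vectors `v`. -/
noncomputable def lamMin {m : ℕ} (A : Matrix (Fin m) (Fin m) ℝ) : ℝ :=
  sInf {r : ℝ | ∃ v : Fin m → ℝ, v ⬝ᵥ v = 1 ∧ r = v ⬝ᵥ (A *ᵥ v)}

/-- A design `ξ` is E-optimal if `λ₁(M(ξ)) ≥ λ₁(M(ξ'))` for every design `ξ'`. -/
def IsEOptimal {X : Type*} [Fintype X] {m : ℕ}
    (H : X → Matrix (Fin m) (Fin m) ℝ) (ξ : X → ℝ) : Prop :=
  IsDesign ξ ∧ ∀ ξ' : X → ℝ, IsDesign ξ' → lamMin (infoMatrix H ξ') ≤ lamMin (infoMatrix H ξ)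

namespace Stmt6

variable {m : ℕ}

lemma raySet_eq (A : Matrix (Fin m) (Fin m) ℝ) :
    {r : ℝ | ∃ v : Fin m → ℝ, v ⬝ᵥ v = 1 ∧ r = v ⬝ᵥ (A *ᵥ v)} =
      (fun v : Fin m → ℝ => v ⬝ᵥ (A *ᵥ v)) '' {v | v ⬝ᵥ v = 1} := by
  ext r
  constructor
  · rintro ⟨v, hv, rfl⟩; exact ⟨v, hv, rfl⟩
  · rintro ⟨v, hv, rfl⟩; exact ⟨v, hv, rfl⟩

lemma cont_quad (A : Matrix (Fin m) (Fin m) ℝ) :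
    Continuous fun v : Fin m → ℝ => v ⬝ᵥ (A *ᵥ v) := by
  simp only [dotProduct, Matrix.mulVec]
  exact continuous_finset_sum _ fun i _ => (continuous_apply i).mul
    (continuous_finset_sum _ fun j _ => continuous_const.mul (continuous_apply j))

lemma isCompact_unitSphere : IsCompact {v : Fin m → ℝ | v ⬝ᵥ v = 1} := by
  apply Metric.isCompact_of_isClosed_isBounded
  · have : Continuous fun v : Fin m → ℝ => v ⬝ᵥ v := by
      simp only [dotProduct]
      exact continuous_finset_sum _ fun i _ => (continuous_apply i).mul (continuous_apply i)
    exact isClosed_eq this continuous_const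
  · apply Bornology.IsBounded.subset (Metric.isBounded_closedBall (x := (0 : Fin m → ℝ)) (r := 1))
    intro v hv
    rw [Metric.mem_closedBall, dist_zero_right]
    rw [pi_norm_le_iff_of_nonneg (by norm_num)]
    intro i
    rw [Real.norm_eq_abs, abs_le_one_iff_mul_self_le_one]
    calc v i * v i ≤ ∑ j, v j * v j :=
          Finset.single_le_sum (fun j _ => mul_self_nonneg (v j)) (Finset.mem_univ i)
    _ = 1 := hv

lemma lamMin_le {A : Matrix (Fin m) (Fin m) ℝ} {v : Fin m → ℝ} (hv : v ⬝ᵥ v = 1) :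
    lamMin A ≤ v ⬝ᵥ (A *ᵥ v) := by
  unfold lamMin
  rw [raySet_eq]
  exact csInf_le ((isCompact_unitSphere.image (cont_quad A)).bddBelow) ⟨v, hv, rfl⟩

lemma unit_exists (hm : 0 < m) : ∃ v : Fin m → ℝ, v ⬝ᵥ v = 1 := by
  refine ⟨Pi.single ⟨0, hm⟩ 1, ?_⟩
  simp [dotProduct, Pi.single_apply]

lemma le_lamMin (hm : 0 < m) {A : Matrix (Fin m) (Fin m) ℝ} {c : ℝ}
    (hc : ∀ v : Fin m → ℝ, v ⬝ᵥ v = 1 → c ≤ v ⬝ᵥ (A *ᵥ v)) : c ≤ lamMin A := by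
  unfold lamMin
  apply le_csInf
  · obtain ⟨v, hv⟩ := unit_exists hm
    exact ⟨_, v, hv, rfl⟩
  · rintro r ⟨v, hv, rfl⟩; exact hc v hv


lemma trace_mul_vecMulVec (A : Matrix (Fin m) (Fin m) ℝ) (w : Fin m → ℝ) :
    (A * vecMulVec w w).trace = w ⬝ᵥ (A *ᵥ w) := by
  simp only [Matrix.trace, Matrix.diag_apply, Matrix.mul_apply, Matrix.vecMulVec_apply,
    dotProduct, Matrix.mulVec, Finset.mul_sum]
  apply Finset.sum_congr rfl
  intro i _
  apply Finset.sum_congr rfl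
  intro j _
  ring

lemma isCompact_convexHull_of_isCompact {V : Type*} [NormedAddCommGroup V]
    [NormedSpace ℝ V] [FiniteDimensional ℝ V] {s : Set V} (hs : IsCompact s) :
    IsCompact (convexHull ℝ s) := by
  classical
  rcases s.eq_empty_or_nonempty with rfl | ⟨z₀, hz₀⟩
  · simpa using isCompact_empty
  set n := Module.finrank ℝ V + 1 with hn
  set F : (Fin n → ℝ) × (Fin n → V) → V := fun p => ∑ i, p.1 i • p.2 i with hF
  have hFcont : Continuous F := by
    apply continuous_finset_sum
    intro i _
    exact ((continuous_apply i).comp continuous_fst).smul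
      ((continuous_apply i).comp continuous_snd)
  have hK : IsCompact ((stdSimplex ℝ (Fin n)) ×ˢ (Set.univ.pi fun _ : Fin n => s)) :=
    (isCompact_stdSimplex _ _).prod (isCompact_univ_pi fun _ => hs)
  have himg : convexHull ℝ s =
      F '' ((stdSimplex ℝ (Fin n)) ×ˢ (Set.univ.pi fun _ : Fin n => s)) := by
    apply Set.Subset.antisymm
    · intro q hq
      obtain ⟨ι, hι, z, w, hzs, hai, hw0, hw1, hsum⟩ := eq_pos_convex_span_of_mem_convexHull hq
      letI := hι
      have hcard : Fintype.card ι ≤ n := by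
        have h1 := hai.card_le_finrank_succ
        have h2 := Submodule.finrank_le (vectorSpan ℝ (Set.range z))
        omega
      obtain ⟨e⟩ : Nonempty (ι ↪ Fin n) :=
        Function.Embedding.nonempty_of_card_le (by simpa using hcard)
      set w' : Fin n → ℝ := fun j => if hj : ∃ i, e i = j then w hj.choose else 0 with hw'
      set z' : Fin n → V := fun j => if hj : ∃ i, e i = j then z hj.choose else z₀ with hz'
      have hkey : ∀ i : ι, w' (e i) = w i ∧ z' (e i) = z i := by
        intro i
        have hj : ∃ i', e i' = e i := ⟨i, rfl⟩
        have hch : hj.choose = i := e.injective hj.choose_spec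
        constructor
        · simp only [hw', dif_pos hj, hch]
        · simp only [hz', dif_pos hj, hch]
      have hnotin : ∀ j ∈ Finset.univ \ Finset.univ.image e, w' j = 0 := by
        intro j hj
        rw [Finset.mem_sdiff, Finset.mem_image] at hj
        have : ¬ ∃ i, e i = j := by
          rintro ⟨i, rfl⟩
          exact hj.2 ⟨i, Finset.mem_univ i, rfl⟩
        simp only [hw', dif_neg this]
      have hsum' : ∀ G : ℝ → V → V, (∀ vv, G 0 vv = 0) →
          ∑ j, G (w' j) (z' j) = ∑ i, G (w i) (z i) := by
        intro G hG0
        rw [← Finset.sum_subset (Finset.subset_univ (Finset.univ.image e))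
          (fun j _ hj => by rw [hnotin j (Finset.mem_sdiff.mpr ⟨Finset.mem_univ j, hj⟩)] ; exact hG0 _)]
        rw [Finset.sum_image (fun a _ b _ hab => e.injective hab)]
        exact Finset.sum_congr rfl fun i _ => by rw [(hkey i).1, (hkey i).2]
      refine ⟨(w', z'), ⟨?_, ?_⟩, ?_⟩
      · constructor
        · intro j
          by_cases hj : ∃ i, e i = j
          · simp only [hw', dif_pos hj]; exact (hw0 _).le
          · simp only [hw', dif_neg hj]; exact le_refl 0
        · rw [← hw1]
          rw [← Finset.sum_subset (Finset.subset_univ (Finset.univ.image e))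
            (fun j _ hj => hnotin j (Finset.mem_sdiff.mpr ⟨Finset.mem_univ j, hj⟩))]
          rw [Finset.sum_image (fun a _ b _ hab => e.injective hab)]
          exact Finset.sum_congr rfl fun i _ => (hkey i).1
      · intro j _
        by_cases hj : ∃ i, e i = j
        · simp only [hz', dif_pos hj]; exact hzs (Set.mem_range_self _)
        · simp only [hz', dif_neg hj]; exact hz₀
      · show ∑ j, w' j • z' j = q
        rw [hsum' (fun a vv => a • vv) (fun vv => zero_smul ℝ vv), hsum]
    · rintro x ⟨⟨w, p⟩, ⟨hw, hp⟩, rfl⟩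
      have hmem := Finset.centerMass_mem_convexHull (Finset.univ : Finset (Fin n))
        (fun i _ => hw.1 i) (by rw [hw.2]; norm_num)
        (fun i _ => hp i (Set.mem_univ i))
      rwa [Finset.centerMass_eq_of_sum_1 _ _ hw.2] at hmem
  rw [himg]
  exact hK.image hFcont

lemma compl2 {u : Fin m → (Fin m → ℝ)}
    (hortho : ∀ i j, u i ⬝ᵥ u j = if i = j then 1 else 0)
    (a b : Fin m → ℝ) : ∑ i, (u i ⬝ᵥ a) * (u i ⬝ᵥ b) = a ⬝ᵥ b := by
  classical
  set U : Matrix (Fin m) (Fin m) ℝ := Matrix.of u with hU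
  have h1 : U * Uᵀ = 1 := by
    ext i j
    rw [Matrix.mul_apply, Matrix.one_apply]
    simpa [U, Matrix.transpose_apply, dotProduct] using hortho i j
  have h2 : Uᵀ * U = 1 := mul_eq_one_comm.mp h1
  have hstep : ∀ c : Fin m → ℝ, U *ᵥ c = fun i => u i ⬝ᵥ c := fun c => rfl
  calc ∑ i, (u i ⬝ᵥ a) * (u i ⬝ᵥ b) = (U *ᵥ a) ⬝ᵥ (U *ᵥ b) := by
        rw [hstep, hstep]; rfl
  _ = ((U *ᵥ a) ᵥ* U) ⬝ᵥ b := Matrix.dotProduct_mulVec _ _ _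
  _ = (Uᵀ *ᵥ (U *ᵥ a)) ⬝ᵥ b := by rw [Matrix.mulVec_transpose]
  _ = ((Uᵀ * U) *ᵥ a) ⬝ᵥ b := by rw [Matrix.mulVec_mulVec]
  _ = a ⬝ᵥ b := by rw [h2, Matrix.one_mulVec]

lemma complv {u : Fin m → (Fin m → ℝ)}
    (hortho : ∀ i j, u i ⬝ᵥ u j = if i = j then 1 else 0)
    (w : Fin m → ℝ) : ∑ i, (u i ⬝ᵥ w) • u i = w := by
  funext j
  have h := compl2 hortho w (Pi.single j 1)
  simpa [dotProduct_single, Finset.sum_apply] using h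

-- helper: dot with sum / mulVec of sum
lemma mulVec_sum' {ι : Type*} (s : Finset ι) (A : Matrix (Fin m) (Fin m) ℝ)
    (f : ι → (Fin m → ℝ)) : A *ᵥ (∑ j ∈ s, f j) = ∑ j ∈ s, A *ᵥ f j := by
  simp only [← Matrix.mulVecLin_apply, map_sum]

lemma dotProduct_sum' {ι : Type*} (s : Finset ι) (v : Fin m → ℝ)
    (f : ι → (Fin m → ℝ)) : v ⬝ᵥ (∑ j ∈ s, f j) = ∑ j ∈ s, v ⬝ᵥ f j := by
  simp only [dotProduct, Finset.sum_apply, Finset.mul_sum]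
  rw [Finset.sum_comm]

lemma quad_eq_spec {u : Fin m → (Fin m → ℝ)} {lam : Fin m → ℝ}
    {M : Matrix (Fin m) (Fin m) ℝ}
    (hortho : ∀ i j, u i ⬝ᵥ u j = if i = j then 1 else 0)
    (heig : ∀ i, M *ᵥ u i = lam i • u i)
    (w : Fin m → ℝ) : w ⬝ᵥ (M *ᵥ w) = ∑ i, lam i * (u i ⬝ᵥ w)^2 := by
  conv_lhs => rw [show M *ᵥ w = M *ᵥ (∑ i, (u i ⬝ᵥ w) • u i) by rw [complv hortho]]
  rw [mulVec_sum', dotProduct_sum']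
  apply Finset.sum_congr rfl
  intro i _
  rw [Matrix.mulVec_smul, heig i, dotProduct_smul, dotProduct_smul]
  rw [dotProduct_comm w (u i)]
  simp [smul_eq_mul]
  ring

lemma sum_mulVec' {ι : Type*} (s : Finset ι) (A : ι → Matrix (Fin m) (Fin m) ℝ)
    (w : Fin m → ℝ) : (∑ j ∈ s, A j) *ᵥ w = ∑ j ∈ s, (A j) *ᵥ w := by
  funext i
  simp only [Matrix.mulVec, dotProduct, Finset.sum_apply, Matrix.sum_apply,
    Finset.sum_mul]
  rw [Finset.sum_comm]

lemma dotProduct_sum'' {ι : Type*} (s : Finset ι) (v : Fin m → ℝ)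
    (f : ι → (Fin m → ℝ)) : v ⬝ᵥ (∑ j ∈ s, f j) = ∑ j ∈ s, v ⬝ᵥ f j := by
  simp only [dotProduct, Finset.sum_apply, Finset.mul_sum]
  rw [Finset.sum_comm]

lemma quad_info {X : Type*} [Fintype X] (H : X → Matrix (Fin m) (Fin m) ℝ)
    (ζ : X → ℝ) (w : Fin m → ℝ) :
    w ⬝ᵥ (infoMatrix H ζ *ᵥ w) = ∑ x, ζ x * (w ⬝ᵥ (H x *ᵥ w)) := by
  unfold infoMatrix
  rw [sum_mulVec', dotProduct_sum'']
  apply Finset.sum_congr rfl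
  intro x _
  rw [Matrix.smul_mulVec, dotProduct_smul, smul_eq_mul]

theorem exists_certificate {X : Type*} [Fintype X] [Nonempty X] (hm : 0 < m)
    (H : X → Matrix (Fin m) (Fin m) ℝ)
    (ξstar : X → ℝ) (hEopt : IsEOptimal H ξstar) :
    ∃ (ι : Type) (t : Finset ι) (c : ι → ℝ) (g : ι → (Fin m → ℝ)),
      (∀ j ∈ t, 0 ≤ c j) ∧ (∑ j ∈ t, c j) = 1 ∧ (∀ j, g j ⬝ᵥ g j = 1) ∧
      (∀ x, ∑ j ∈ t, c j * (g j ⬝ᵥ (H x *ᵥ g j)) ≤ lamMin (infoMatrix H ξstar)) := by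
  classical
  set ls := lamMin (infoMatrix H ξstar) with hls
  set Sp : Set (Fin m → ℝ) := {w | w ⬝ᵥ w = 1} with hSp
  set φ : (Fin m → ℝ) → (X → ℝ) := fun w x => w ⬝ᵥ (H x *ᵥ w) with hφ
  have hφcont : Continuous φ := continuous_pi fun x => cont_quad (H x)
  set S : Set (X → ℝ) := convexHull ℝ (φ '' Sp) with hS
  set Q : Set (X → ℝ) := {q | ∀ x, q x ≤ ls} with hQ
  obtain ⟨e₀, he₀⟩ := unit_exists (m := m) hm
  by_cases hSQ : (S ∩ Q).Nonempty
  · -- extract certificate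
    obtain ⟨q, hqS, hqQ⟩ := hSQ
    rw [hS, _root_.convexHull_eq] at hqS
    obtain ⟨ι, t, cw, z, hc0, hc1, hz, hq⟩ := hqS
    set g : ι → (Fin m → ℝ) := fun j =>
      if hj : ∃ w, (w ⬝ᵥ w = 1) ∧ φ w = z j then hj.choose else e₀ with hg
    have hg1 : ∀ j, g j ⬝ᵥ g j = 1 := by
      intro j
      by_cases hj : ∃ w, (w ⬝ᵥ w = 1) ∧ φ w = z j
      · simp only [hg, dif_pos hj]; exact hj.choose_spec.1
      · simp only [hg, dif_neg hj]; exact he₀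
    have hgz : ∀ j ∈ t, φ (g j) = z j := by
      intro j hj
      obtain ⟨w₀, hw₀, hφw⟩ := hz j hj
      have hex : ∃ w, (w ⬝ᵥ w = 1) ∧ φ w = z j := ⟨w₀, hw₀, hφw⟩
      simp only [hg, dif_pos hex]
      exact hex.choose_spec.2
    refine ⟨ι, t, cw, g, hc0, hc1, hg1, ?_⟩
    intro x
    have hqx : ∑ j ∈ t, cw j * (g j ⬝ᵥ (H x *ᵥ g j)) = q x := by
      rw [← hq, Finset.centerMass_eq_of_sum_1 _ _ hc1, Finset.sum_apply]
      apply Finset.sum_congr rfl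
      intro j hj
      rw [Pi.smul_apply, smul_eq_mul, ← hgz j hj]
    rw [hqx]
    exact hqQ x
  · -- separation
    exfalso
    have hdisj : Disjoint S Q :=
      Set.disjoint_iff_inter_eq_empty.mpr (Set.not_nonempty_iff_eq_empty.mp hSQ)
    have hScomp : IsCompact S :=
      isCompact_convexHull_of_isCompact (isCompact_unitSphere.image hφcont)
    have hSconv : Convex ℝ S := convex_convexHull ℝ _
    have hQconv : Convex ℝ Q := by
      intro q1 h1 q2 h2 a bb ha hb hab
      intro x
      have e1 := h1 x
      have e2 := h2 x
      have : (a • q1 + bb • q2) x = a * q1 x + bb * q2 x := rfl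
      rw [this]
      have hls' : a * ls + bb * ls = ls := by rw [← add_mul, hab, one_mul]
      have p1 := mul_le_mul_of_nonneg_left e1 ha
      have p2 := mul_le_mul_of_nonneg_left e2 hb
      linarith
    have hQclosed : IsClosed Q := by
      have : Q = ⋂ x, {q : X → ℝ | q x ≤ ls} := by
        ext q; simp [hQ, Set.mem_iInter]
      rw [this]
      exact isClosed_iInter fun x => isClosed_le (continuous_apply x) continuous_const
    obtain ⟨f, uu, vv, hfS, huv, hfQ⟩ :=
      geometric_hahn_banach_compact_closed hSconv hScomp hQconv hQclosed hdisj
    set p : X → ℝ := fun x => f (fun x' => if x = x' then (1:ℝ) else 0) with hp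
    have hflin : ∀ q : X → ℝ, f q = ∑ x, q x * p x := by
      intro q
      conv_lhs => rw [pi_eq_sum_univ q]
      rw [map_sum]
      apply Finset.sum_congr rfl
      intro x _
      rw [f.map_smul, smul_eq_mul]
    have hconstls : f (fun _ => ls) = ls * ∑ x, p x := by
      rw [hflin]; rw [Finset.mul_sum]
    have hQconst : (fun _ => ls) ∈ Q := fun x => le_refl ls
    have hple : ∀ x, p x ≤ 0 := by
      intro x₀
      by_contra hpos
      push_neg at hpos
      set n : ℝ := (ls * (∑ x, p x) - vv) / p x₀ with hn
      have hnpos : 0 < n := by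
        apply div_pos _ hpos
        have := hfQ _ hQconst
        rw [hconstls] at this
        linarith
      set qn : X → ℝ := fun x' => ls - (if x₀ = x' then n else 0) with hqn
      have hqnQ : qn ∈ Q := by
        intro x
        simp only [hqn]
        by_cases hx : x₀ = x
        · rw [if_pos hx]; linarith
        · rw [if_neg hx]; simp
      have hfqn : f qn = ls * (∑ x, p x) - n * p x₀ := by
        rw [hflin]
        simp only [hqn, sub_mul, ite_mul, zero_mul]
        rw [Finset.sum_sub_distrib]
        congr 1
        · rw [Finset.mul_sum]
        · rw [Finset.sum_ite_eq (Finset.univ : Finset X) x₀ (fun x => n * p x)]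
          rw [if_pos (Finset.mem_univ x₀)]
      have := hfQ qn hqnQ
      rw [hfqn, hn] at this
      field_simp at this; linarith
    set r : X → ℝ := fun x => -p x with hr
    have hr0 : ∀ x, 0 ≤ r x := fun x => by simp [hr]; linarith [hple x]
    set σ : ℝ := ∑ x, r x with hσ
    have hσ0 : 0 ≤ σ := Finset.sum_nonneg fun x _ => hr0 x
    have hφS : ∀ w, w ⬝ᵥ w = 1 → φ w ∈ S := fun w hw =>
      subset_convexHull ℝ _ (Set.mem_image_of_mem φ hw)
    have hfφ : ∀ w, f (φ w) = -∑ x, (w ⬝ᵥ (H x *ᵥ w)) * r x := by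
      intro w
      rw [hflin]
      rw [← Finset.sum_neg_distrib]
      apply Finset.sum_congr rfl
      intro x _
      simp [hr, hφ]
    have hσpos : 0 < σ := by
      rcases lt_or_eq_of_le hσ0 with h | h
      · exact h
      · exfalso
        have hrzero : ∀ x, r x = 0 := by
          intro x
          have := (Finset.sum_eq_zero_iff_of_nonneg (fun x _ => hr0 x)).mp h.symm
          exact this x (Finset.mem_univ x)
        have hf0 : ∀ q : X → ℝ, f q = 0 := by
          intro q
          rw [hflin]
          apply Finset.sum_eq_zero
          intro x _
          have : p x = 0 := by have := hrzero x; simp [hr] at this; linarith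
          rw [this, mul_zero]
        have h1 := hfS _ (hφS e₀ he₀)
        have h2 := hfQ _ hQconst
        rw [hf0] at h1
        rw [hf0] at h2
        linarith
    set ζ : X → ℝ := fun x => r x / σ with hζ
    have hζdesign : IsDesign ζ := by
      constructor
      · intro x; exact div_nonneg (hr0 x) hσ0
      · rw [hζ]
        simp only []
        rw [← Finset.sum_div]
        rw [← hσ]
        field_simp
    have hlsσ : ls * σ < -vv := by
      have := hfQ _ hQconst
      rw [hconstls] at this
      have hpσ : ∑ x, p x = -σ := by
        rw [hσ]
        simp [hr, Finset.sum_neg_distrib]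
      rw [hpσ] at this
      linarith
    have hquadlb : ∀ w : Fin m → ℝ, w ⬝ᵥ w = 1 → -uu/σ ≤ w ⬝ᵥ (infoMatrix H ζ *ᵥ w) := by
      intro w hw
      have h1 := hfS _ (hφS w hw)
      rw [hfφ w] at h1
      have h2 : -uu < ∑ x, (w ⬝ᵥ (H x *ᵥ w)) * r x := by linarith
      rw [quad_info]
      have : ∑ x, ζ x * (w ⬝ᵥ (H x *ᵥ w)) = (∑ x, (w ⬝ᵥ (H x *ᵥ w)) * r x) / σ := by
        rw [Finset.sum_div]
        apply Finset.sum_congr rfl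
        intro x _
        rw [hζ]
        field_simp
      rw [this]
      exact (div_le_div_iff_of_pos_right hσpos).mpr h2.le
    have hlam := le_lamMin hm hquadlb
    have hEle := hEopt.2 ζ hζdesign
    have h3 : -uu/σ ≤ ls := le_trans hlam hEle
    have h4 : -uu ≤ ls * σ := by
      rw [div_le_iff₀ hσpos] at h3
      linarith
    linarith

end Stmt6

namespace CS

lemma quad_as_sumsq {Hs : Matrix (Fin m) (Fin m) ℝ} {N : Matrix (Fin m) (Fin m) ℝ}
    (hN : Hs = Nᴴ * N) (v : Fin m → ℝ) :
    v ⬝ᵥ (Hs *ᵥ v) = ∑ k, ((N *ᵥ v) k)^2 := by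
  rw [hN, ← Matrix.mulVec_mulVec, Matrix.dotProduct_mulVec, Matrix.vecMul_conjTranspose]
  simp [dotProduct, sq]

lemma cs_main {u : Fin m → (Fin m → ℝ)}
    (hortho : ∀ i j, u i ⬝ᵥ u j = if i = j then 1 else 0)
    {Hs : Matrix (Fin m) (Fin m) ℝ} (hHs : Hs.PosSemidef)
    {b : Fin m → ℝ} (hb : ∀ i, 0 < b i) (w : Fin m → ℝ) :
    w ⬝ᵥ (Hs *ᵥ w) ≤ (∑ i, (u i ⬝ᵥ (Hs *ᵥ u i)) / b i) * (∑ i, b i * (u i ⬝ᵥ w)^2) := by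
  classical
  obtain ⟨N, hN⟩ : ∃ N : Matrix (Fin m) (Fin m) ℝ, Hs = Nᴴ * N := by open scoped MatrixOrder in exact CStarAlgebra.nonneg_iff_eq_star_mul_self.mp hHs.nonneg
  rw [quad_as_sumsq hN w]
  have hrow : ∀ k, (N *ᵥ w) k = ∑ i, (u i ⬝ᵥ (fun j => N k j)) * (u i ⬝ᵥ w) := by
    intro k
    rw [Stmt6.compl2 hortho]
    rfl
  calc ∑ k, ((N *ᵥ w) k)^2
      ≤ ∑ k, (∑ i, (u i ⬝ᵥ (fun j => N k j))^2 / b i) * (∑ i, b i * (u i ⬝ᵥ w)^2) := by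
        apply Finset.sum_le_sum
        intro k _
        rw [hrow k]
        have key := Finset.sum_mul_sq_le_sq_mul_sq Finset.univ
          (fun i => (u i ⬝ᵥ (fun j => N k j)) / Real.sqrt (b i))
          (fun i => Real.sqrt (b i) * (u i ⬝ᵥ w))
        have h1 : ∀ i : Fin m, (u i ⬝ᵥ (fun j => N k j)) / Real.sqrt (b i) *
            (Real.sqrt (b i) * (u i ⬝ᵥ w)) = (u i ⬝ᵥ (fun j => N k j)) * (u i ⬝ᵥ w) := by
          intro i
          have hs : Real.sqrt (b i) ≠ 0 := (Real.sqrt_pos.mpr (hb i)).ne'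
          field_simp
        have h2 : ∀ i : Fin m, ((u i ⬝ᵥ (fun j => N k j)) / Real.sqrt (b i))^2 =
            (u i ⬝ᵥ (fun j => N k j))^2 / b i := by
          intro i
          rw [div_pow, Real.sq_sqrt (hb i).le]
        have h3 : ∀ i : Fin m, (Real.sqrt (b i) * (u i ⬝ᵥ w))^2 = b i * (u i ⬝ᵥ w)^2 := by
          intro i
          rw [mul_pow, Real.sq_sqrt (hb i).le]
        simp only [h1, h2, h3] at key
        exact key
    _ = (∑ i, (∑ k, (u i ⬝ᵥ (fun j => N k j))^2) / b i) * (∑ i, b i * (u i ⬝ᵥ w)^2) := by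
        rw [← Finset.sum_mul]
        congr 1
        rw [Finset.sum_comm]
        apply Finset.sum_congr rfl
        intro i _
        rw [Finset.sum_div]
    _ = (∑ i, (u i ⬝ᵥ (Hs *ᵥ u i)) / b i) * (∑ i, b i * (u i ⬝ᵥ w)^2) := by
        congr 1
        apply Finset.sum_congr rfl
        intro i _
        congr 1
        rw [quad_as_sumsq hN (u i)]
        apply Finset.sum_congr rfl
        intro k _
        congr 1
        rw [dotProduct_comm]
        rfl

end CS


open Stmt6 in
/-- let `ξ` have nonsingular information matrix `M` with eigenvalues
`λ₁ ≤ … ≤ λ_m` and corresponding orthonormal eigenvectors `u₁, …, u_m`. With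
`Z = ∑ αᵢ vᵢ vᵢᵀ` built from unit-norm eigenvectors of `M` and nonnegative weights summing
to 1, and `h = max_{x ∈ X} tr(H(x) Z)`, if `h > λ₁`, then for every `x*` supporting some
E-optimal design and every `y ∈ [0, λ₁ / (h - λ₁))` one has
`∑ i, (uᵢᵀ H(x*) uᵢ) / ((λᵢ - h) y + λ₁) ≥ 1`. -/
theorem stmt_6 {X : Type*} [Fintype X] [Nonempty X] {m : ℕ} (hm : 0 < m)
    (H : X → Matrix (Fin m) (Fin m) ℝ) (hH : ∀ x, (H x).PosSemidef)
    (ξ : X → ℝ) (hξ : IsDesign ξ) (hns : (infoMatrix H ξ).det ≠ 0)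
    (lam : Fin m → ℝ) (hmono : Monotone lam)
    (u : Fin m → (Fin m → ℝ))
    (hortho : ∀ i j, u i ⬝ᵥ u j = if i = j then 1 else 0)
    (heig : ∀ i, (infoMatrix H ξ) *ᵥ u i = lam i • u i)
    (s : ℕ) (v : Fin s → (Fin m → ℝ))
    (hvnorm : ∀ i, v i ⬝ᵥ v i = 1)
    (hveig : ∀ i, ∃ μ : ℝ, (infoMatrix H ξ) *ᵥ v i = μ • v i)
    (α : Fin s → ℝ) (hα : ∀ i, 0 ≤ α i) (hαsum : ∑ i, α i = 1)
    (Z : Matrix (Fin m) (Fin m) ℝ) (hZ : Z = ∑ i, α i • vecMulVec (v i) (v i))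
    (h : ℝ) (hh : h = Finset.univ.sup' Finset.univ_nonempty (fun x => (H x * Z).trace))
    (hgt : lam ⟨0, hm⟩ < h) :
    ∀ ξstar : X → ℝ, IsEOptimal H ξstar →
      ∀ xstar : X, 0 < ξstar xstar →
        ∀ y : ℝ, 0 ≤ y → y < lam ⟨0, hm⟩ / (h - lam ⟨0, hm⟩) →
          1 ≤ ∑ i, (u i ⬝ᵥ (H xstar *ᵥ u i)) / ((lam i - h) * y + lam ⟨0, hm⟩) := by
  intro ξstar hEopt xstar hxs y hy0 hy1
  classical
  -- basic facts
  have hquad : ∀ (x : X) (w : Fin m → ℝ), 0 ≤ w ⬝ᵥ (H x *ᵥ w) := by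
    intro x w
    have := (hH x).dotProduct_mulVec_nonneg w
    simpa using this
  have hu00 : u ⟨0, hm⟩ ⬝ᵥ u ⟨0, hm⟩ = 1 := by simpa using hortho ⟨0, hm⟩ ⟨0, hm⟩
  have hl1quad : u ⟨0, hm⟩ ⬝ᵥ (infoMatrix H ξ *ᵥ u ⟨0, hm⟩) = lam ⟨0, hm⟩ := by
    rw [heig, dotProduct_smul, hu00, smul_eq_mul, mul_one]
  have hl1nonneg : 0 ≤ lam ⟨0, hm⟩ := by
    rw [← hl1quad, quad_info]
    exact Finset.sum_nonneg fun x _ => mul_nonneg (hξ.1 x) (hquad x _)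
  have hl1pos : 0 < lam ⟨0, hm⟩ := by
    rcases lt_or_eq_of_le hl1nonneg with hp | hp
    · exact hp
    · exfalso
      apply hns
      rw [← Matrix.exists_mulVec_eq_zero_iff]
      refine ⟨u ⟨0, hm⟩, ?_, ?_⟩
      · intro hu0
        rw [hu0] at hu00
        simpa using hu00
      · rw [heig, ← hp, zero_smul]
  have hMquad : ∀ w, w ⬝ᵥ (infoMatrix H ξ *ᵥ w) = ∑ i, lam i * (u i ⬝ᵥ w)^2 :=
    quad_eq_spec hortho heig
  have hl1le : ∀ i, lam ⟨0, hm⟩ ≤ lam i := fun i => hmono (by simp [Fin.le_def])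
  have hsumsq : ∀ w : Fin m → ℝ, w ⬝ᵥ w = 1 → ∑ i, (u i ⬝ᵥ w)^2 = 1 := by
    intro w hw
    have hc := compl2 hortho w w
    rw [hw] at hc
    rw [← hc]
    exact Finset.sum_congr rfl fun i _ => by ring
  have hMlb : ∀ w : Fin m → ℝ, w ⬝ᵥ w = 1 → lam ⟨0, hm⟩ ≤ w ⬝ᵥ (infoMatrix H ξ *ᵥ w) := by
    intro w hw
    rw [hMquad w]
    calc lam ⟨0, hm⟩ = ∑ i, lam ⟨0, hm⟩ * (u i ⬝ᵥ w)^2 := by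
          rw [← Finset.mul_sum, hsumsq w hw, mul_one]
    _ ≤ ∑ i, lam i * (u i ⬝ᵥ w)^2 :=
        Finset.sum_le_sum fun i _ => mul_le_mul_of_nonneg_right (hl1le i) (sq_nonneg _)
  have h1ls : lam ⟨0, hm⟩ ≤ lamMin (infoMatrix H ξstar) :=
    le_trans (le_lamMin hm hMlb) (hEopt.2 ξ hξ)
  have hlspos : 0 < lamMin (infoMatrix H ξstar) := lt_of_lt_of_le hl1pos h1ls
  -- lamMin (infoMatrix H ξstar) ≤ h
  have htrZ : ∀ x, (H x * Z).trace = ∑ i, α i * (v i ⬝ᵥ (H x *ᵥ v i)) := by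
    intro x
    rw [hZ, Matrix.mul_sum, Matrix.trace_sum]
    apply Finset.sum_congr rfl
    intro i _
    rw [Matrix.mul_smul, Matrix.trace_smul, trace_mul_vecMulVec, smul_eq_mul]
  have htrZle : ∀ x, (H x * Z).trace ≤ h := by
    intro x
    rw [hh]
    exact Finset.le_sup' (fun x => (H x * Z).trace) (Finset.mem_univ x)
  have hlsh : lamMin (infoMatrix H ξstar) ≤ h := by
    have h1 : lamMin (infoMatrix H ξstar) ≤ ∑ i, α i * (v i ⬝ᵥ (infoMatrix H ξstar *ᵥ v i)) := by
      calc lamMin (infoMatrix H ξstar) = ∑ i, α i * lamMin (infoMatrix H ξstar) := by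
            rw [← Finset.sum_mul, hαsum, one_mul]
      _ ≤ _ := Finset.sum_le_sum fun i _ =>
            mul_le_mul_of_nonneg_left (lamMin_le (hvnorm i)) (hα i)
    have h2 : ∑ i, α i * (v i ⬝ᵥ (infoMatrix H ξstar *ᵥ v i))
        = ∑ x, ξstar x * (H x * Z).trace := by
      calc ∑ i, α i * (v i ⬝ᵥ (infoMatrix H ξstar *ᵥ v i))
          = ∑ i, α i * ∑ x, ξstar x * (v i ⬝ᵥ (H x *ᵥ v i)) := by
            exact Finset.sum_congr rfl fun i _ => by rw [quad_info]
      _ = ∑ x, ξstar x * ∑ i, α i * (v i ⬝ᵥ (H x *ᵥ v i)) := by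
            simp only [Finset.mul_sum]
            rw [Finset.sum_comm]
            exact Finset.sum_congr rfl fun x _ => Finset.sum_congr rfl fun i _ => by ring
      _ = ∑ x, ξstar x * (H x * Z).trace := by
            exact Finset.sum_congr rfl fun x _ => by rw [htrZ]
    have h3 : ∑ x, ξstar x * (H x * Z).trace ≤ h := by
      calc ∑ x, ξstar x * (H x * Z).trace ≤ ∑ x, ξstar x * h :=
            Finset.sum_le_sum fun x _ => mul_le_mul_of_nonneg_left (htrZle x) (hEopt.1.1 x)
      _ = h := by rw [← Finset.sum_mul, hEopt.1.2, one_mul]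
    rw [h2] at h1
    linarith
  -- certificate
  obtain ⟨ι, t, c, g, hc0, hc1, hg1, hcert⟩ := exists_certificate hm H ξstar hEopt
  -- support condition
  have hswap : ∀ ζ : X → ℝ,
      ∑ x, ζ x * ∑ j ∈ t, c j * (g j ⬝ᵥ (H x *ᵥ g j))
        = ∑ j ∈ t, c j * (g j ⬝ᵥ (infoMatrix H ζ *ᵥ g j)) := by
    intro ζ
    calc ∑ x, ζ x * ∑ j ∈ t, c j * (g j ⬝ᵥ (H x *ᵥ g j))
        = ∑ x, ∑ j ∈ t, c j * (ζ x * (g j ⬝ᵥ (H x *ᵥ g j))) := by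
          refine Finset.sum_congr rfl fun x _ => ?_
          rw [Finset.mul_sum]
          exact Finset.sum_congr rfl fun j _ => by ring
    _ = ∑ j ∈ t, ∑ x, c j * (ζ x * (g j ⬝ᵥ (H x *ᵥ g j))) := Finset.sum_comm
    _ = ∑ j ∈ t, c j * (g j ⬝ᵥ (infoMatrix H ζ *ᵥ g j)) := by
          refine Finset.sum_congr rfl fun j _ => ?_
          rw [← Finset.mul_sum, quad_info]
  have hTle : ∀ x, ∑ j ∈ t, c j * (g j ⬝ᵥ (H x *ᵥ g j)) ≤ lamMin (infoMatrix H ξstar) := hcert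
  have hsupge : lamMin (infoMatrix H ξstar)
      ≤ ∑ x, ξstar x * ∑ j ∈ t, c j * (g j ⬝ᵥ (H x *ᵥ g j)) := by
    rw [hswap ξstar]
    calc lamMin (infoMatrix H ξstar) = ∑ j ∈ t, c j * lamMin (infoMatrix H ξstar) := by
          rw [← Finset.sum_mul, hc1, one_mul]
    _ ≤ _ := Finset.sum_le_sum fun j hj =>
          mul_le_mul_of_nonneg_left (lamMin_le (hg1 j)) (hc0 j hj)
  have hsupp : lamMin (infoMatrix H ξstar) ≤ ∑ j ∈ t, c j * (g j ⬝ᵥ (H xstar *ᵥ g j)) := by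
    by_contra hlt
    push_neg at hlt
    have hstrict : ∑ x, ξstar x * ∑ j ∈ t, c j * (g j ⬝ᵥ (H x *ᵥ g j))
        < ∑ x, ξstar x * lamMin (infoMatrix H ξstar) :=
      Finset.sum_lt_sum (fun x _ => mul_le_mul_of_nonneg_left (hTle x) (hEopt.1.1 x))
        ⟨xstar, Finset.mem_univ xstar, mul_lt_mul_of_pos_left hlt hxs⟩
    rw [← Finset.sum_mul, hEopt.1.2, one_mul] at hstrict
    linarith
  -- the weight function b
  have hyh : y * (h - lam ⟨0, hm⟩) < lam ⟨0, hm⟩ := by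
    rw [lt_div_iff₀ (by linarith)] at hy1
    linarith
  have hbpos : ∀ i, 0 < (lam i - h) * y + lam ⟨0, hm⟩ := by
    intro i
    have h1i := hl1le i
    have h2i : (lam ⟨0, hm⟩ - h) * y ≤ (lam i - h) * y :=
      mul_le_mul_of_nonneg_right (by linarith) hy0
    nlinarith
  have hCS := fun w => CS.cs_main hortho (hH xstar) hbpos w
  have hbeta : ∀ w : Fin m → ℝ, w ⬝ᵥ w = 1 →
      (∑ i, ((lam i - h) * y + lam ⟨0, hm⟩) * (u i ⬝ᵥ w)^2)
        = y * (w ⬝ᵥ (infoMatrix H ξ *ᵥ w)) + (lam ⟨0, hm⟩ - h*y) := by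
    intro w hw
    calc ∑ i, ((lam i - h) * y + lam ⟨0, hm⟩) * (u i ⬝ᵥ w)^2
        = y * (∑ i, lam i * (u i ⬝ᵥ w)^2) + (lam ⟨0, hm⟩ - h*y) * (∑ i, (u i ⬝ᵥ w)^2) := by
          rw [Finset.mul_sum, Finset.mul_sum, ← Finset.sum_add_distrib]
          exact Finset.sum_congr rfl fun i _ => by ring
    _ = y * (w ⬝ᵥ (infoMatrix H ξ *ᵥ w)) + (lam ⟨0, hm⟩ - h*y) := by
          rw [← hMquad w, hsumsq w hw, mul_one]
  -- the trace value tv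
  have htvle : ∑ j ∈ t, c j * (g j ⬝ᵥ (infoMatrix H ξ *ᵥ g j)) ≤ lamMin (infoMatrix H ξstar) := by
    rw [← hswap ξ]
    calc ∑ x, ξ x * ∑ j ∈ t, c j * (g j ⬝ᵥ (H x *ᵥ g j))
        ≤ ∑ x, ξ x * lamMin (infoMatrix H ξstar) :=
          Finset.sum_le_sum fun x _ => mul_le_mul_of_nonneg_left (hTle x) (hξ.1 x)
    _ = lamMin (infoMatrix H ξstar) := by rw [← Finset.sum_mul, hξ.2, one_mul]
  have htvge : lam ⟨0, hm⟩ ≤ ∑ j ∈ t, c j * (g j ⬝ᵥ (infoMatrix H ξ *ᵥ g j)) := by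
    calc lam ⟨0, hm⟩ = ∑ j ∈ t, c j * lam ⟨0, hm⟩ := by rw [← Finset.sum_mul, hc1, one_mul]
    _ ≤ _ := Finset.sum_le_sum fun j hj =>
          mul_le_mul_of_nonneg_left (hMlb (g j) (hg1 j)) (hc0 j hj)
  -- main chain
  have hτ0 : 0 ≤ ∑ i, (u i ⬝ᵥ (H xstar *ᵥ u i)) / ((lam i - h) * y + lam ⟨0, hm⟩) :=
    Finset.sum_nonneg fun i _ => div_nonneg (hquad xstar (u i)) (hbpos i).le
  have hchain : ∑ j ∈ t, c j * (g j ⬝ᵥ (H xstar *ᵥ g j))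
      ≤ (∑ i, (u i ⬝ᵥ (H xstar *ᵥ u i)) / ((lam i - h) * y + lam ⟨0, hm⟩)) *
        (y * (∑ j ∈ t, c j * (g j ⬝ᵥ (infoMatrix H ξ *ᵥ g j))) + (lam ⟨0, hm⟩ - h*y)) := by
    calc ∑ j ∈ t, c j * (g j ⬝ᵥ (H xstar *ᵥ g j))
        ≤ ∑ j ∈ t, c j * ((∑ i, (u i ⬝ᵥ (H xstar *ᵥ u i)) / ((lam i - h) * y + lam ⟨0, hm⟩)) *
            (y * (g j ⬝ᵥ (infoMatrix H ξ *ᵥ g j)) + (lam ⟨0, hm⟩ - h*y))) := by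
          refine Finset.sum_le_sum fun j hj => ?_
          refine mul_le_mul_of_nonneg_left ?_ (hc0 j hj)
          have hcs := hCS (g j)
          rw [hbeta (g j) (hg1 j)] at hcs
          exact hcs
    _ = (∑ i, (u i ⬝ᵥ (H xstar *ᵥ u i)) / ((lam i - h) * y + lam ⟨0, hm⟩)) *
          (y * (∑ j ∈ t, c j * (g j ⬝ᵥ (infoMatrix H ξ *ᵥ g j))) + (lam ⟨0, hm⟩ - h*y)) := by
          set τ := ∑ i, (u i ⬝ᵥ (H xstar *ᵥ u i)) / ((lam i - h) * y + lam ⟨0, hm⟩) with hτdef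
          set L := lam ⟨0, hm⟩ - h*y with hLdef
          calc ∑ j ∈ t, c j * (τ * (y * (g j ⬝ᵥ (infoMatrix H ξ *ᵥ g j)) + L))
              = ∑ j ∈ t, ((τ * y) * (c j * (g j ⬝ᵥ (infoMatrix H ξ *ᵥ g j))) + (τ * L) * c j) :=
                Finset.sum_congr rfl fun j _ => by ring
          _ = (τ * y) * (∑ j ∈ t, c j * (g j ⬝ᵥ (infoMatrix H ξ *ᵥ g j))) + (τ * L) * (∑ j ∈ t, c j) := by
                rw [Finset.sum_add_distrib, ← Finset.mul_sum, ← Finset.mul_sum]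
          _ = τ * (y * (∑ j ∈ t, c j * (g j ⬝ᵥ (infoMatrix H ξ *ᵥ g j))) + L) := by
                rw [hc1, mul_one]
                ring
  -- conclude
  set tv := ∑ j ∈ t, c j * (g j ⬝ᵥ (infoMatrix H ξ *ᵥ g j)) with htvdef
  set τ := ∑ i, (u i ⬝ᵥ (H xstar *ᵥ u i)) / ((lam i - h) * y + lam ⟨0, hm⟩) with hτdef
  have hD1 : y * tv + (lam ⟨0, hm⟩ - h*y) ≤ lamMin (infoMatrix H ξstar) := by
    nlinarith [mul_le_mul_of_nonneg_left htvle hy0]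
  have hD2 : 0 < y * tv + (lam ⟨0, hm⟩ - h*y) := by
    nlinarith [mul_le_mul_of_nonneg_left htvge hy0]
  have hfin : lamMin (infoMatrix H ξstar) ≤ τ * (y * tv + (lam ⟨0, hm⟩ - h*y)) :=
    le_trans hsupp hchain
  by_contra hτ1
  push_neg at hτ1
  have : τ * (y * tv + (lam ⟨0, hm⟩ - h*y)) < 1 * (y * tv + (lam ⟨0, hm⟩ - h*y)) :=
    mul_lt_mul_of_pos_right hτ1 hD2
  rw [one_mul] at this
  linarith
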